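/- arXiv:1202.3585 — 2 statements merged into one kernel-verified Lean document; each statement's English description precedes it below -/
import Mathlib

section
/- Let G be a locally compact group acting continuously by isometries on a hyperbolic space X and fixing ξ ∈ ∂X, and let h be a horokernel based at ξ. Then for any x ∈ X, the function g ↦ h(x, gx) on the stabilizer G_ξ is a quasicharacter: the defect |h(x, g₁g₂x) − h(x, g₁x) − h(x, g₂x)| is bounded by a constant depending only on the hyperbolicity constant of X. -/
/-!
Writing `z = g₂ x` and `vₙ = g₁⁻¹ uₙ`, the cocycle identity and the isometry `g₁` turn the defect
into the limit of `2 (z|vₙ)ₓ - 2 (z|uₙ)ₓ`. Since `g₁` fixes `ξ`, the product `(uₙ|vₙ)ₓ` tends to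
infinity, so eventually it exceeds `d(x, z)`, which bounds both `(z|uₙ)ₓ` and `(z|vₙ)ₓ`; the
four-point condition then makes these two products `δ`-close.
-/

open Filter

/-- The Gromov product `(y|z)_x`. -/
noncomputable def gp {X : Type*} [MetricSpace X] (x y z : X) : ℝ :=
  (dist x y + dist x z - dist y z) / 2

open Topology

section GromovProduct

variable {X : Type*} [MetricSpace X]

lemma gp_comm (x y z : X) : gp x y z = gp x z y := by
  simp only [gp, dist_comm y z]
  ring

lemma gp_le_dist (x y z : X) : gp x y z ≤ dist x y := by
  have := dist_triangle x y z
  simp only [gp]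
  linarith

lemma gp_sub_dist_le_gp (x₀ x y z : X) : gp x₀ y z - dist x₀ x ≤ gp x y z := by
  have hy := dist_triangle x₀ x y
  have hz := dist_triangle x₀ x z
  simp only [gp]
  linarith

lemma dist_sub_dist_eq (x z w : X) : dist x w - dist z w = 2 * gp x z w - dist x z := by
  simp only [gp, dist_comm z w]
  ring

lemma tendsto_atTop_gp_change_base {ι : Type*} {l : Filter ι} {x₀ : X} {u v : ι → X}
    (h : Tendsto (fun n => gp x₀ (u n) (v n)) l atTop) (x : X) :
    Tendsto (fun n => gp x (u n) (v n)) l atTop :=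
  tendsto_atTop_mono (fun n => gp_sub_dist_le_gp x₀ x (u n) (v n))
    (tendsto_atTop_add_const_right l (-dist x₀ x) h)

lemma abs_gp_sub_gp_le {δ : ℝ} (hδ : ∀ x y z w : X, min (gp x y w) (gp x w z) - δ ≤ gp x y z)
    {x z a b : X} (hab : dist x z ≤ gp x a b) : |gp x z a - gp x z b| ≤ δ := by
  have ha : min (gp x z a) (gp x a b) = gp x z a := min_eq_left ((gp_le_dist x z a).trans hab)
  have hb : min (gp x z b) (gp x b a) = gp x z b := by
    rw [gp_comm x b a]
    exact min_eq_left ((gp_le_dist x z b).trans hab)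
  have hab' := hδ x z b a
  have hba := hδ x z a b
  rw [ha] at hab'
  rw [hb] at hba
  rw [abs_sub_le_iff]
  constructor <;> linarith

end GromovProduct

lemma tendsto_horokernel_defect {X G : Type*} [MetricSpace X] [Group G] [MulAction G X]
    (hiso : ∀ g : G, Isometry fun x : X => g • x) {u : ℕ → X} {h : X → X → ℝ}
    (hh : ∀ x y : X, Tendsto (fun n => dist x (u n) - dist y (u n)) atTop (𝓝 (h x y)))
    (g₁ g₂ : G) (x : X) :
    Tendsto (fun n => 2 * gp x (g₂ • x) (g₁⁻¹ • u n) - 2 * gp x (g₂ • x) (u n)) atTop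
      (𝓝 (h x ((g₁ * g₂) • x) - h x (g₁ • x) - h x (g₂ • x))) := by
  have hdist : ∀ y n, dist (g₁ • y) (u n) = dist y (g₁⁻¹ • u n) := fun y n => by
    rw [← (hiso g₁).dist_eq y, smul_inv_smul]
  refine (((hh x _).sub (hh x _)).sub (hh x _)).congr fun n => ?_
  rw [mul_smul, hdist, hdist]
  linarith [dist_sub_dist_eq x (g₂ • x) (g₁⁻¹ • u n), dist_sub_dist_eq x (g₂ • x) (u n)]

/-- Let `G` act continuously by isometries on a `δ`-hyperbolic space `X` fixing `ξ ∈ ∂X`,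
and let `h` be a horokernel based at `ξ`.  Then for any `x`, the function
`g ↦ h(x, g x)` on the stabilizer is a quasicharacter: its defect is bounded by a constant
depending only on the hyperbolicity constant.  (Here `ξ` is represented by a Cauchy–Gromov
sequence `u`, `h` is a pointwise limit of `d(·,uₙ) - d(·,uₙ)`, and every `g ∈ G` fixes `ξ`.) -/
theorem stmt_13 {X G : Type*} [MetricSpace X] [Group G] [MulAction G X]
    (hiso : ∀ g : G, Isometry fun x : X => g • x)
    (δ : ℝ)
    (hδ : ∀ x y z w : X, min (gp x y w) (gp x w z) - δ ≤ gp x y z)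
    (x₀ : X) :
    ∃ C : ℝ, ∀ (u : ℕ → X) (h : X → X → ℝ),
      -- `u` is a Cauchy–Gromov sequence representing `ξ`
      Tendsto (fun p : ℕ × ℕ => gp x₀ (u p.1) (u p.2)) atTop atTop →
      -- `h` is a horokernel based at `ξ`
      (∀ x y : X, Tendsto (fun n => dist x (u n) - dist y (u n)) atTop (nhds (h x y))) →
      -- every element of `G` fixes `ξ`
      (∀ g : G, Tendsto (fun n => gp x₀ (u n) (g • u n)) atTop atTop) →
      ∀ (g₁ g₂ : G) (x : X),
        |h x ((g₁ * g₂) • x) - h x (g₁ • x) - h x (g₂ • x)| ≤ C := by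
  refine ⟨2 * δ, fun u h _ hh hfix g₁ g₂ x => ?_⟩
  have hfar : ∀ᶠ n in atTop, dist x (g₂ • x) ≤ gp x (u n) (g₁⁻¹ • u n) :=
    (tendsto_atTop_gp_change_base (hfix g₁⁻¹) x).eventually_ge_atTop _
  refine le_of_tendsto (tendsto_horokernel_defect hiso hh g₁ g₂ x).abs ?_
  filter_upwards [hfar] with n hn
  rw [← mul_sub, abs_mul, abs_two, abs_sub_comm]
  exact mul_le_mul_of_nonneg_left (abs_gp_sub_gp_le hδ hn) zero_le_two
end

section
/- Let α be a compaction of a locally compact group H with limit group L (the intersection of all compact vacuum sets). Then a compact subset K of H is a vacuum set for α if and only if K is a neighbourhood of L. -/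
/-!
Vacuum sets form a filter stable under `α`, and `α` maps compact sets to compact sets, so every
point of the limit group `L` has an `αⁿ`-preimage in `L`, i.e. `L ⊆ αⁿ L`. If `K` is a vacuum
set, it absorbs a compact neighbourhood `V` of `L` under some `αⁿ`; since `αⁿ` is open,
`L ⊆ αⁿ (int V) ⊆ int K`. Conversely, for a compact vacuum set `Ω`, the set `⋂ₙ αⁿ Ω` lies in
every compact vacuum set, hence in `L ⊆ int K`; by compactness of `Ω \ int K` a finite
intersection `Ω ∩ ⋂_{n ∈ u} αⁿ Ω`, still a vacuum set, already lies in `K`.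
-/

def IsVacuumSet {H : Type*} [Group H] [TopologicalSpace H] (α : MulAut H) (Ω : Set H) :
    Prop :=
  ∀ M : Set H, IsCompact M → ∃ N : ℕ, ∀ n : ℕ, N < n → ⇑(α ^ n) '' M ⊆ Ω

open Set Filter Function

theorem IsCompact.exists_finset_inter_biInter_subset {X ι : Type*} [TopologicalSpace X]
    {s U : Set X} (hs : IsCompact s) {t : ι → Set X} (htc : ∀ i, IsClosed (t i))
    (hU : IsOpen U) (hst : s ∩ ⋂ i, t i ⊆ U) : ∃ u : Finset ι, s ∩ ⋂ i ∈ u, t i ⊆ U := by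
  obtain ⟨u, hu⟩ := (hs.diff hU).elim_finite_subfamily_closed t htc
    (by rwa [sdiff_inter_right_comm, sdiff_eq_empty])
  exact ⟨u, by rwa [sdiff_inter_right_comm, sdiff_eq_empty] at hu⟩

namespace MulAut

variable {M : Type*} [Mul M] (α : MulAut M)

theorem coe_pow (n : ℕ) : ⇑(α ^ n) = (⇑α)^[n] := by
  induction n with
  | zero => rfl
  | succ n ih => rw [pow_succ', coe_mul, ih, iterate_succ']

variable [TopologicalSpace M] {α}

theorem continuous_pow (hc : Continuous ⇑α) (n : ℕ) : Continuous ⇑(α ^ n) :=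
  coe_pow α n ▸ hc.iterate n

theorem isOpenMap_pow (hc' : Continuous ⇑α.symm) (n : ℕ) : IsOpenMap ⇑(α ^ n) := by
  have hα : IsOpenMap α := .of_inverse hc' α.apply_symm_apply α.symm_apply_apply
  rw [coe_pow]
  induction n with
  | zero => exact IsOpenMap.id
  | succ n ih => exact ih.comp hα

end MulAut

section VacuumSets

variable {H : Type*} [Group H] [TopologicalSpace H] {α : MulAut H} {Ω K : Set H}

def vacuumFilter (α : MulAut H) : Filter H where
  sets := {Ω | IsVacuumSet α Ω}
  univ_sets _ _ := ⟨0, fun _ _ => subset_univ _⟩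
  sets_of_superset h hs M hM := (h M hM).imp fun _ hN n hn => (hN n hn).trans hs
  inter_sets h h' M hM := by
    obtain ⟨N, hN⟩ := h M hM
    obtain ⟨N', hN'⟩ := h' M hM
    exact ⟨max N N', fun n hn =>
      subset_inter (hN n ((le_max_left _ _).trans_lt hn))
        (hN' n ((le_max_right _ _).trans_lt hn))⟩

theorem IsVacuumSet.image (h : IsVacuumSet α Ω) : IsVacuumSet α (⇑α '' Ω) := by
  intro M hM
  obtain ⟨N, hN⟩ := h M hM
  refine ⟨N + 1, fun n hn => ?_⟩
  obtain ⟨m, rfl⟩ : ∃ m, n = m + 1 := ⟨n - 1, by omega⟩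
  rw [pow_succ', MulAut.coe_mul, image_comp]
  exact image_mono (hN m (by omega))

theorem IsVacuumSet.image_pow (h : IsVacuumSet α Ω) (n : ℕ) :
    IsVacuumSet α (⇑(α ^ n) '' Ω) := by
  induction n with
  | zero => simpa using h
  | succ n ih => simpa only [pow_succ', MulAut.coe_mul, image_comp] using ih.image

def limitGroup (α : MulAut H) : Set H :=
  ⋂₀ {Ω : Set H | IsCompact Ω ∧ IsVacuumSet α Ω}

theorem limitGroup_subset (hΩ : IsCompact Ω) (hv : IsVacuumSet α Ω) : limitGroup α ⊆ Ω :=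
  sInter_subset_of_mem ⟨hΩ, hv⟩

theorem isCompact_limitGroup [T2Space H] (hΩ : IsCompact Ω) (hv : IsVacuumSet α Ω) :
    IsCompact (limitGroup α) :=
  hΩ.of_isClosed_subset (isClosed_sInter fun _ h => h.1.isClosed) (limitGroup_subset hΩ hv)

theorem limitGroup_subset_image_pow (hc : Continuous ⇑α) (n : ℕ) :
    limitGroup α ⊆ ⇑(α ^ n) '' limitGroup α := by
  intro x hx
  refine ⟨(α ^ n).symm x, fun Ω ⟨hΩ, hv⟩ => ?_, (α ^ n).apply_symm_apply x⟩
  obtain ⟨y, hy, rfl⟩ :=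
    limitGroup_subset (hΩ.image (MulAut.continuous_pow hc n)) (hv.image_pow n) hx
  rwa [MulEquiv.symm_apply_apply]

theorem iInter_image_pow_subset_limitGroup (hΩ : IsCompact Ω) :
    ⋂ n : ℕ, ⇑(α ^ n) '' Ω ⊆ limitGroup α := by
  intro x hx Ω' ⟨_, hv'⟩
  obtain ⟨N, hN⟩ := hv' Ω hΩ
  exact hN (N + 1) N.lt_succ_self (mem_iInter.1 hx (N + 1))

theorem IsVacuumSet.limitGroup_subset_interior [WeaklyLocallyCompactSpace H] [T2Space H]
    {Ω₀ : Set H} (hc : Continuous ⇑α) (hc' : Continuous ⇑α.symm) (hΩ₀ : IsCompact Ω₀)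
    (hv₀ : IsVacuumSet α Ω₀) (hK : IsVacuumSet α K) : limitGroup α ⊆ interior K := by
  obtain ⟨V, hV, hLV⟩ := exists_compact_superset (isCompact_limitGroup hΩ₀ hv₀)
  obtain ⟨N, hN⟩ := hK V hV
  calc limitGroup α ⊆ ⇑(α ^ (N + 1)) '' limitGroup α := limitGroup_subset_image_pow hc _
    _ ⊆ ⇑(α ^ (N + 1)) '' interior V := image_mono hLV
    _ ⊆ interior (⇑(α ^ (N + 1)) '' V) := (MulAut.isOpenMap_pow hc' _).image_interior_subset V
    _ ⊆ interior K := interior_mono (hN _ N.lt_succ_self)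

theorem isVacuumSet_of_limitGroup_subset_interior [T2Space H] {Ω₀ : Set H}
    (hc : Continuous ⇑α) (hΩ₀ : IsCompact Ω₀) (hv₀ : IsVacuumSet α Ω₀)
    (hK : limitGroup α ⊆ interior K) : IsVacuumSet α K := by
  obtain ⟨u, hu⟩ := hΩ₀.exists_finset_inter_biInter_subset
    (fun n => (hΩ₀.image (MulAut.continuous_pow hc n)).isClosed) isOpen_interior
    ((inter_subset_right.trans (iInter_image_pow_subset_limitGroup hΩ₀)).trans hK)
  have hfin : Ω₀ ∩ ⋂ n ∈ u, ⇑(α ^ n) '' Ω₀ ∈ vacuumFilter α :=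
    inter_mem hv₀ ((biInter_finset_mem u).2 fun n _ => hv₀.image_pow n)
  exact mem_of_superset hfin (hu.trans interior_subset)

end VacuumSets

theorem stmt_19_general {H : Type*} [Group H] [TopologicalSpace H]
    [LocallyCompactSpace H] [T2Space H]
    (α : MulAut H) (hc : Continuous ⇑α) (hc' : Continuous ⇑α.symm)
    (hcpt : ∃ Ω : Set H, IsCompact Ω ∧ IsVacuumSet α Ω)
    (L : Set H) (hL : L = ⋂₀ {Ω : Set H | IsCompact Ω ∧ IsVacuumSet α Ω})
    (K : Set H) :
    IsVacuumSet α K ↔ L ⊆ interior K := by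
  subst hL
  obtain ⟨Ω₀, hΩ₀, hv₀⟩ := hcpt
  exact ⟨IsVacuumSet.limitGroup_subset_interior hc hc' hΩ₀ hv₀,
    isVacuumSet_of_limitGroup_subset_interior hc hΩ₀ hv₀⟩

/-- Let `α` be a compaction of a locally compact group `H` with limit group `L` (the
intersection of all compact vacuum sets).  A compact subset `K` of `H` is a vacuum set for
`α` if and only if `K` is a neighbourhood of `L`. -/
theorem stmt_19 {H : Type*} [Group H] [TopologicalSpace H] [IsTopologicalGroup H]
    [LocallyCompactSpace H] [T2Space H]
    (α : MulAut H) (hc : Continuous ⇑α) (hc' : Continuous ⇑α.symm)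
    (hcpt : ∃ Ω : Set H, IsCompact Ω ∧ IsVacuumSet α Ω)
    (L : Set H) (hL : L = ⋂₀ {Ω : Set H | IsCompact Ω ∧ IsVacuumSet α Ω})
    (K : Set H) (hK : IsCompact K) :
    IsVacuumSet α K ↔ L ⊆ interior K :=
  stmt_19_general α hc hc' hcpt L hL K
end
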